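/- arXiv:1810.01697 — 2 statements merged into one kernel-verified Lean document; each statement's English description precedes it below -/
import Mathlib

section
/- Let U, Δ₃, Δ₄ be positive reals with Δ₃ ≠ Δ₄, set s = sin(2U)/(2U), and let θ₁, θ₂ be reals with sin θ₁ ≠ 0 and cos θ₂ ≠ 0. For k = 1, 2 let B_k, A3_k, A4_k, a3_k, a4_k be positive reals, and let A1, A2 be positive reals. Assume: (i) A1/B₁ = (1/2)(1 − s)/sin²θ₁; (ii) A2/B₂ = (1/2)(1 + s)/cos²θ₂; (iii) (1 + Δ₃) · a3_k^{Δ₃} · (A3_k/B_k) = U^{Δ₃} for k = 1, 2; (iv) (1 + Δ₄) · a4_k^{Δ₄} · (A4_k/B_k) = U^{Δ₄} for k = 1, 2. Then A2 · (A3₂)^{Δ₄/(Δ₃−Δ₄)} · (A4₂)^{−Δ₃/(Δ₃−Δ₄)} · (a4₂/a3₂)^{−Δ₃Δ₄/(Δ₃−Δ₄)} · cos²θ₂ + A1 · (A3₁)^{Δ₄/(Δ₃−Δ₄)} · (A4₁)^{−Δ₃/(Δ₃−Δ₄)} · (a4₁/a3₁)^{−Δ₃Δ₄/(Δ₃−Δ₄)}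 · sin²θ₁ = [(1 + Δ₄)^{1/Δ₄}/(1 + Δ₃)^{1/Δ₃}]^{Δ₃Δ₄/(Δ₃−Δ₄)}. -/
/-!
Taking logarithms in (iii) and (iv) and forming Δ₄·(iii) − Δ₃·(iv) eliminates `U`; this shows
that for each `k` the power product of `A3_k, A4_k, a4_k / a3_k` equals `C / B_k`, where `C` is the
right-hand side. By (i) and (ii) the two summands are then `C (1 - s) / 2` and `C (1 + s) / 2`.
-/

open Real

lemma log_eq_of_mul_rpow_mul_div_eq_rpow {c a A B U Δ : ℝ} (hc : 0 < c) (ha : 0 < a)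
    (hA : 0 < A) (hB : 0 < B) (hU : 0 < U) (h : c * a ^ Δ * (A / B) = U ^ Δ) :
    log c + Δ * log a + log A - log B = Δ * log U := by
  have hlog := congrArg log h
  rw [log_mul (by positivity) (by positivity), log_mul hc.ne' (by positivity),
    log_div hA.ne' hB.ne', log_rpow ha, log_rpow hU] at hlog
  linear_combination hlog

theorem hybrid_product_eq_const_div {U Δ₃ Δ₄ c₃ c₄ B A₃ A₄ a₃ a₄ : ℝ} (hU : 0 < U)
    (hΔ₃ : Δ₃ ≠ 0) (hΔ₄ : Δ₄ ≠ 0) (hne : Δ₃ ≠ Δ₄) (hc₃ : 0 < c₃) (hc₄ : 0 < c₄) (hB : 0 < B)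
    (hA₃ : 0 < A₃) (hA₄ : 0 < A₄) (ha₃ : 0 < a₃) (ha₄ : 0 < a₄)
    (h₃ : c₃ * a₃ ^ Δ₃ * (A₃ / B) = U ^ Δ₃) (h₄ : c₄ * a₄ ^ Δ₄ * (A₄ / B) = U ^ Δ₄) :
    A₃ ^ (Δ₄ / (Δ₃ - Δ₄)) * A₄ ^ (-Δ₃ / (Δ₃ - Δ₄)) * (a₄ / a₃) ^ (-(Δ₃ * Δ₄) / (Δ₃ - Δ₄)) =
      (c₄ ^ (1 / Δ₄) / c₃ ^ (1 / Δ₃)) ^ (Δ₃ * Δ₄ / (Δ₃ - Δ₄)) / B := by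
  have e₃ := log_eq_of_mul_rpow_mul_div_eq_rpow hc₃ ha₃ hA₃ hB hU h₃
  have e₄ := log_eq_of_mul_rpow_mul_div_eq_rpow hc₄ ha₄ hA₄ hB hU h₄
  have hd : Δ₃ - Δ₄ ≠ 0 := sub_ne_zero.mpr hne
  refine log_injOn_pos (Set.mem_Ioi.2 (by positivity)) (Set.mem_Ioi.2 (by positivity)) ?_
  rw [log_mul (by positivity) (by positivity), log_mul (by positivity) (by positivity),
    log_rpow hA₃, log_rpow hA₄, log_rpow (by positivity), log_div ha₄.ne' ha₃.ne',
    log_div (by positivity) hB.ne', log_rpow (by positivity), log_div (by positivity) (by positivity),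
    log_rpow hc₄, log_rpow hc₃]
  field_simp
  linear_combination Δ₄ * e₃ - Δ₃ * e₄

theorem secondary_complete_hybrid_formula_first_variant_general
    (U Δ₃ Δ₄ : ℝ) (hU : 0 < U) (hΔ₃ : 0 < Δ₃) (hΔ₄ : 0 < Δ₄) (hne : Δ₃ ≠ Δ₄)
    (θ₁ θ₂ : ℝ) (hθ₁ : Real.sin θ₁ ≠ 0) (hθ₂ : Real.cos θ₂ ≠ 0)
    (B₁ B₂ A3₁ A3₂ A4₁ A4₂ a3₁ a3₂ a4₁ a4₂ A1 A2 : ℝ)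
    (hB₁ : 0 < B₁) (hB₂ : 0 < B₂)
    (hA3₁ : 0 < A3₁) (hA3₂ : 0 < A3₂) (hA4₁ : 0 < A4₁) (hA4₂ : 0 < A4₂)
    (ha3₁ : 0 < a3₁) (ha3₂ : 0 < a3₂) (ha4₁ : 0 < a4₁) (ha4₂ : 0 < a4₂)
    (h1 : A1 / B₁ = 1 / 2 * (1 - Real.sin (2 * U) / (2 * U)) / Real.sin θ₁ ^ 2)
    (h2 : A2 / B₂ = 1 / 2 * (1 + Real.sin (2 * U) / (2 * U)) / Real.cos θ₂ ^ 2)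
    (h3₁ : (1 + Δ₃) * a3₁ ^ Δ₃ * (A3₁ / B₁) = U ^ Δ₃)
    (h3₂ : (1 + Δ₃) * a3₂ ^ Δ₃ * (A3₂ / B₂) = U ^ Δ₃)
    (h4₁ : (1 + Δ₄) * a4₁ ^ Δ₄ * (A4₁ / B₁) = U ^ Δ₄)
    (h4₂ : (1 + Δ₄) * a4₂ ^ Δ₄ * (A4₂ / B₂) = U ^ Δ₄) :
    A2 * A3₂ ^ (Δ₄ / (Δ₃ - Δ₄)) * A4₂ ^ (-Δ₃ / (Δ₃ - Δ₄)) *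
        (a4₂ / a3₂) ^ (-(Δ₃ * Δ₄) / (Δ₃ - Δ₄)) * Real.cos θ₂ ^ 2 +
      A1 * A3₁ ^ (Δ₄ / (Δ₃ - Δ₄)) * A4₁ ^ (-Δ₃ / (Δ₃ - Δ₄)) *
        (a4₁ / a3₁) ^ (-(Δ₃ * Δ₄) / (Δ₃ - Δ₄)) * Real.sin θ₁ ^ 2 =
    ((1 + Δ₄) ^ (1 / Δ₄) / (1 + Δ₃) ^ (1 / Δ₃)) ^ (Δ₃ * Δ₄ / (Δ₃ - Δ₄)) := by
  have hc₃ : 0 < 1 + Δ₃ := by linarith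
  have hc₄ : 0 < 1 + Δ₄ := by linarith
  have k₁ := hybrid_product_eq_const_div hU hΔ₃.ne' hΔ₄.ne' hne hc₃ hc₄ hB₁ hA3₁ hA4₁ ha3₁ ha4₁
    h3₁ h4₁
  have k₂ := hybrid_product_eq_const_div hU hΔ₃.ne' hΔ₄.ne' hne hc₃ hc₄ hB₂ hA3₂ hA4₂ ha3₂ ha4₂
    h3₂ h4₂
  set C := ((1 + Δ₄) ^ (1 / Δ₄) / (1 + Δ₃) ^ (1 / Δ₃)) ^ (Δ₃ * Δ₄ / (Δ₃ - Δ₄))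
  have e₁ := (div_eq_div_iff hB₁.ne' (pow_ne_zero 2 hθ₁)).mp h1
  have e₂ := (div_eq_div_iff hB₂.ne' (pow_ne_zero 2 hθ₂)).mp h2
  calc _ = C / B₂ * (A2 * cos θ₂ ^ 2) + C / B₁ * (A1 * sin θ₁ ^ 2) := by
        rw [← k₁, ← k₂]; ring
    _ = C := by
        rw [e₁, e₂]
        field_simp
        ring

theorem secondary_complete_hybrid_formula_first_variant
    (U Δ₃ Δ₄ : ℝ) (hU : 0 < U) (hΔ₃ : 0 < Δ₃) (hΔ₄ : 0 < Δ₄) (hne : Δ₃ ≠ Δ₄)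
    (θ₁ θ₂ : ℝ) (hθ₁ : Real.sin θ₁ ≠ 0) (hθ₂ : Real.cos θ₂ ≠ 0)
    (B₁ B₂ A3₁ A3₂ A4₁ A4₂ a3₁ a3₂ a4₁ a4₂ A1 A2 : ℝ)
    (hB₁ : 0 < B₁) (hB₂ : 0 < B₂)
    (hA3₁ : 0 < A3₁) (hA3₂ : 0 < A3₂) (hA4₁ : 0 < A4₁) (hA4₂ : 0 < A4₂)
    (ha3₁ : 0 < a3₁) (ha3₂ : 0 < a3₂) (ha4₁ : 0 < a4₁) (ha4₂ : 0 < a4₂)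
    (hA1 : 0 < A1) (hA2 : 0 < A2)
    (h1 : A1 / B₁ = 1 / 2 * (1 - Real.sin (2 * U) / (2 * U)) / Real.sin θ₁ ^ 2)
    (h2 : A2 / B₂ = 1 / 2 * (1 + Real.sin (2 * U) / (2 * U)) / Real.cos θ₂ ^ 2)
    (h3₁ : (1 + Δ₃) * a3₁ ^ Δ₃ * (A3₁ / B₁) = U ^ Δ₃)
    (h3₂ : (1 + Δ₃) * a3₂ ^ Δ₃ * (A3₂ / B₂) = U ^ Δ₃)
    (h4₁ : (1 + Δ₄) * a4₁ ^ Δ₄ * (A4₁ / B₁) = U ^ Δ₄)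
    (h4₂ : (1 + Δ₄) * a4₂ ^ Δ₄ * (A4₂ / B₂) = U ^ Δ₄) :
    A2 * A3₂ ^ (Δ₄ / (Δ₃ - Δ₄)) * A4₂ ^ (-Δ₃ / (Δ₃ - Δ₄)) *
        (a4₂ / a3₂) ^ (-(Δ₃ * Δ₄) / (Δ₃ - Δ₄)) * Real.cos θ₂ ^ 2 +
      A1 * A3₁ ^ (Δ₄ / (Δ₃ - Δ₄)) * A4₁ ^ (-Δ₃ / (Δ₃ - Δ₄)) *
        (a4₁ / a3₁) ^ (-(Δ₃ * Δ₄) / (Δ₃ - Δ₄)) * Real.sin θ₁ ^ 2 =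
    ((1 + Δ₄) ^ (1 / Δ₄) / (1 + Δ₃) ^ (1 / Δ₃)) ^ (Δ₃ * Δ₄ / (Δ₃ - Δ₄)) :=
  secondary_complete_hybrid_formula_first_variant_general U Δ₃ Δ₄ hU hΔ₃ hΔ₄ hne θ₁ θ₂ hθ₁ hθ₂ B₁ B₂
    A3₁ A3₂ A4₁ A4₂ a3₁ a3₂ a4₁ a4₂ A1 A2 hB₁ hB₂ hA3₁ hA3₂ hA4₁ hA4₂ ha3₁ ha3₂ ha4₁ ha4₂ h1 h2 h3₁
    h3₂ h4₁ h4₂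
end

section
/- Let U, Δ₃, Δ₄ be positive reals with Δ₃ ≠ Δ₄ and set s = sin(2U)/(2U). Let θ₁, θ₂ be reals with sin θ₁ ≠ 0, cos θ₂ ≠ 0; for k = 1, 2 let B_k, A3_k, A4_k, a3_k, a4_k be positive reals and A1, A2 positive reals satisfying: (i) A1/B₁ = (1/2)(1 − s)/sin²θ₁; (ii) A2/B₂ = (1/2)(1 + s)/cos²θ₂; (iii) (1 + Δ₃) · a3_k^{Δ₃} · (A3_k/B_k) = U^{Δ₃} and (1 + Δ₄) · a4_k^{Δ₄} · (A4_k/B_k) = U^{Δ₄} for k = 1, 2. Further, for k = 3, 4 let B_k, A1_k, A2_k be positive reals and θ1_k, θ2_k reals with sin θ1_k ≠ 0, cos θ2_k ≠ 0 satisfying A1_k/B_k = (1/2)(1 − s)/sin²(θ1_k) and A2_k/B_k = (1/2)(1 + s)/cos²(θ2_k), and let a₃, a₄, A₃, A₄ be positive reals with (1 + Δ₃) · a₃^{Δ₃} · (A₃/B₃) = U^{Δ₃} and (1 + Δ₄) · a₄^{Δ₄} · (A₄/B₄) = U^{Δ₄}. Then A2 · (A3₂)^{Δ₄/(Δ₃−Δ₄)}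 · (A4₂)^{−Δ₃/(Δ₃−Δ₄)} · (a4₂/a3₂)^{−Δ₃Δ₄/(Δ₃−Δ₄)} · cos²θ₂ + A1 · (A3₁)^{Δ₄/(Δ₃−Δ₄)} · (A4₁)^{−Δ₃/(Δ₃−Δ₄)} · (a4₁/a3₁)^{−Δ₃Δ₄/(Δ₃−Δ₄)} · sin²θ₁ = (a₃/a₄)^{Δ₃Δ₄/(Δ₃−Δ₄)} · (A₃ / (A2₃·cos²(θ2₃) + A1₃·sin²(θ1₃)))^{Δ₄/(Δ₃−Δ₄)} · (A₄ / (A2₄·cos²(θ2₄) + A1₄·sin²(θ1₄)))^{−Δ₃/(Δ₃−Δ₄)}. -/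
/-!
Each exact formula `(1 + Δ) a^Δ (A / B) = U^Δ` says `A / B = (U / a)^Δ / (1 + Δ)`. Raising the
`Δ₃`-formula to the power `Δ₄ / (Δ₃ - Δ₄)` and the `Δ₄`-formula to `-Δ₃ / (Δ₃ - Δ₄)` makes the
powers of `U` cancel, so the product of the two, corrected by a power of `a₄ / a₃`, is a constant
depending on `Δ₃, Δ₄` only. This constant is both sides of the ternary formula: on the left, the
trigonometric relations turn the two terms into its multiples by the weights `(1 ± sin 2U / 2U) / 2`,
which add up to `1`; on the right, the same weights show that the denominators are `B₃` and `B₄`.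
-/

open Real

/-- The function `(1 + Δ₄)^(1/Δ₄) / (1 + Δ₃)^(1/Δ₃)` eliminated by the crossbreeding, raised to the
power `Δ₃ Δ₄ / (Δ₃ - Δ₄)`. -/
noncomputable def hybridConst (Δ₃ Δ₄ : ℝ) : ℝ :=
  (1 + Δ₄) ^ (Δ₃ / (Δ₃ - Δ₄)) / (1 + Δ₃) ^ (Δ₄ / (Δ₃ - Δ₄))

lemma eq_rpow_div_one_add_of_mul_eq_rpow {U Δ a x : ℝ} (hU : 0 ≤ U) (ha : 0 < a)
    (hΔ : 1 + Δ ≠ 0) (h : (1 + Δ) * a ^ Δ * x = U ^ Δ) :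
    x = (U / a) ^ Δ / (1 + Δ) := by
  rw [div_rpow hU ha.le, eq_div_iff hΔ, eq_div_iff (rpow_pos_of_pos ha Δ).ne', ← h]
  ring

lemma rpow_div_one_add_mul_eq_hybridConst {U Δ₃ Δ₄ a₃ a₄ : ℝ} (hU : 0 < U) (ha₃ : 0 < a₃)
    (ha₄ : 0 < a₄) (hΔ₃ : 0 < 1 + Δ₃) (hΔ₄ : 0 < 1 + Δ₄) (hne : Δ₃ ≠ Δ₄) :
    ((U / a₃) ^ Δ₃ / (1 + Δ₃)) ^ (Δ₄ / (Δ₃ - Δ₄)) *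
        ((U / a₄) ^ Δ₄ / (1 + Δ₄)) ^ (-Δ₃ / (Δ₃ - Δ₄)) *
        (a₄ / a₃) ^ (-(Δ₃ * Δ₄) / (Δ₃ - Δ₄)) = hybridConst Δ₃ Δ₄ := by
  have hD : Δ₃ - Δ₄ ≠ 0 := sub_ne_zero.mpr hne
  refine log_injOn_pos (Set.mem_Ioi.2 (by positivity))
    (Set.mem_Ioi.2 (by unfold hybridConst; positivity)) ?_
  simp only [hybridConst]
  rw [log_mul (by positivity) (by positivity), log_mul (by positivity) (by positivity),
    log_rpow (by positivity), log_rpow (by positivity), log_rpow (by positivity),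
    log_div (by positivity) hΔ₃.ne', log_div (by positivity) hΔ₄.ne',
    log_rpow (by positivity), log_rpow (by positivity), log_div hU.ne' ha₃.ne',
    log_div hU.ne' ha₄.ne', log_div ha₄.ne' ha₃.ne',
    log_div (by positivity) (by positivity), log_rpow hΔ₄, log_rpow hΔ₃]
  field_simp
  ring

section

variable {U Δ₃ Δ₄ a₃ a₄ x₃ x₄ : ℝ}

lemma rpow_mul_rpow_mul_rpow_eq_hybridConst (hU : 0 < U) (ha₃ : 0 < a₃) (ha₄ : 0 < a₄)
    (hΔ₃ : 0 < 1 + Δ₃) (hΔ₄ : 0 < 1 + Δ₄) (hne : Δ₃ ≠ Δ₄)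
    (h₃ : (1 + Δ₃) * a₃ ^ Δ₃ * x₃ = U ^ Δ₃) (h₄ : (1 + Δ₄) * a₄ ^ Δ₄ * x₄ = U ^ Δ₄) :
    x₃ ^ (Δ₄ / (Δ₃ - Δ₄)) * x₄ ^ (-Δ₃ / (Δ₃ - Δ₄)) * (a₄ / a₃) ^ (-(Δ₃ * Δ₄) / (Δ₃ - Δ₄)) =
      hybridConst Δ₃ Δ₄ := by
  rw [eq_rpow_div_one_add_of_mul_eq_rpow hU.le ha₃ hΔ₃.ne' h₃,
    eq_rpow_div_one_add_of_mul_eq_rpow hU.le ha₄ hΔ₄.ne' h₄]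
  exact rpow_div_one_add_mul_eq_hybridConst hU ha₃ ha₄ hΔ₃ hΔ₄ hne

lemma div_rpow_mul_rpow_mul_rpow_eq_hybridConst (hU : 0 < U) (ha₃ : 0 < a₃) (ha₄ : 0 < a₄)
    (hΔ₃ : 0 < 1 + Δ₃) (hΔ₄ : 0 < 1 + Δ₄) (hne : Δ₃ ≠ Δ₄)
    (h₃ : (1 + Δ₃) * a₃ ^ Δ₃ * x₃ = U ^ Δ₃) (h₄ : (1 + Δ₄) * a₄ ^ Δ₄ * x₄ = U ^ Δ₄) :
    (a₃ / a₄) ^ (Δ₃ * Δ₄ / (Δ₃ - Δ₄)) * x₃ ^ (Δ₄ / (Δ₃ - Δ₄)) * x₄ ^ (-Δ₃ / (Δ₃ - Δ₄)) =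
      hybridConst Δ₃ Δ₄ := by
  have hflip : (a₄ / a₃) ^ (-(Δ₃ * Δ₄) / (Δ₃ - Δ₄)) = (a₃ / a₄) ^ (Δ₃ * Δ₄ / (Δ₃ - Δ₄)) := by
    rw [neg_div, rpow_neg (by positivity), ← inv_rpow (by positivity), inv_div]
  rw [← rpow_mul_rpow_mul_rpow_eq_hybridConst hU ha₃ ha₄ hΔ₃ hΔ₄ hne h₃ h₄, hflip]
  ring

lemma mul_rpow_mul_rpow_mul_rpow_mul_eq {B A A₃ A₄ t : ℝ} (hU : 0 < U) (hB : 0 < B)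
    (hA₃ : 0 < A₃) (hA₄ : 0 < A₄) (ha₃ : 0 < a₃) (ha₄ : 0 < a₄)
    (hΔ₃ : 0 < 1 + Δ₃) (hΔ₄ : 0 < 1 + Δ₄) (hne : Δ₃ ≠ Δ₄)
    (h₃ : (1 + Δ₃) * a₃ ^ Δ₃ * (A₃ / B) = U ^ Δ₃) (h₄ : (1 + Δ₄) * a₄ ^ Δ₄ * (A₄ / B) = U ^ Δ₄) :
    A * A₃ ^ (Δ₄ / (Δ₃ - Δ₄)) * A₄ ^ (-Δ₃ / (Δ₃ - Δ₄)) *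
        (a₄ / a₃) ^ (-(Δ₃ * Δ₄) / (Δ₃ - Δ₄)) * t = hybridConst Δ₃ Δ₄ * (A / B * t) := by
  have hD : Δ₃ - Δ₄ ≠ 0 := sub_ne_zero.mpr hne
  have hBB : B ^ (Δ₄ / (Δ₃ - Δ₄)) * B ^ (-Δ₃ / (Δ₃ - Δ₄)) = B⁻¹ := by
    rw [← rpow_add hB, ← add_div, show Δ₄ + -Δ₃ = -(Δ₃ - Δ₄) by ring, neg_div, div_self hD,
      rpow_neg_one]
  rw [← rpow_mul_rpow_mul_rpow_eq_hybridConst hU ha₃ ha₄ hΔ₃ hΔ₄ hne h₃ h₄,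
    div_rpow hA₃.le hB.le, div_rpow hA₄.le hB.le, div_mul_div_comm, hBB, div_inv_eq_mul]
  field_simp

end

lemma mul_add_mul_eq_of_div_eq {A₁ A₂ B s c d : ℝ} (hB : B ≠ 0) (hc : c ≠ 0) (hd : d ≠ 0)
    (h₂ : A₂ / B = 1 / 2 * (1 + s) / c) (h₁ : A₁ / B = 1 / 2 * (1 - s) / d) :
    A₂ * c + A₁ * d = B := by
  rw [div_eq_div_iff hB hc] at h₂
  rw [div_eq_div_iff hB hd] at h₁
  linear_combination h₂ + h₁

theorem exact_ternary_complete_hybrid_formula_general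
    (U Δ₃ Δ₄ : ℝ) (hU : 0 < U) (hΔ₃ : 0 < Δ₃) (hΔ₄ : 0 < Δ₄) (hne : Δ₃ ≠ Δ₄)
    -- data for the first variant (formula (4.4))
    (θ₁ θ₂ : ℝ) (hθ₁ : Real.sin θ₁ ≠ 0) (hθ₂ : Real.cos θ₂ ≠ 0)
    (B₁ B₂ A3₁ A3₂ A4₁ A4₂ a3₁ a3₂ a4₁ a4₂ A1 A2 : ℝ)
    (hB₁ : 0 < B₁) (hB₂ : 0 < B₂)
    (hA3₁ : 0 < A3₁) (hA3₂ : 0 < A3₂) (hA4₁ : 0 < A4₁) (hA4₂ : 0 < A4₂)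
    (ha3₁ : 0 < a3₁) (ha3₂ : 0 < a3₂) (ha4₁ : 0 < a4₁) (ha4₂ : 0 < a4₂)
    (h1 : A1 / B₁ = 1 / 2 * (1 - Real.sin (2 * U) / (2 * U)) / Real.sin θ₁ ^ 2)
    (h2 : A2 / B₂ = 1 / 2 * (1 + Real.sin (2 * U) / (2 * U)) / Real.cos θ₂ ^ 2)
    (h3₁ : (1 + Δ₃) * a3₁ ^ Δ₃ * (A3₁ / B₁) = U ^ Δ₃)
    (h3₂ : (1 + Δ₃) * a3₂ ^ Δ₃ * (A3₂ / B₂) = U ^ Δ₃)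
    (h4₁ : (1 + Δ₄) * a4₁ ^ Δ₄ * (A4₁ / B₁) = U ^ Δ₄)
    (h4₂ : (1 + Δ₄) * a4₂ ^ Δ₄ * (A4₂ / B₂) = U ^ Δ₄)
    -- data for the second variant (formula (5.4))
    (B₃ B₄ A1₃ A1₄ A2₃ A2₄ : ℝ) (θ1₃ θ1₄ θ2₃ θ2₄ : ℝ)
    (hB₃ : 0 < B₃) (hB₄ : 0 < B₄)
    (hθ1₃ : Real.sin θ1₃ ≠ 0) (hθ1₄ : Real.sin θ1₄ ≠ 0)
    (hθ2₃ : Real.cos θ2₃ ≠ 0) (hθ2₄ : Real.cos θ2₄ ≠ 0)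
    (h1₃ : A1₃ / B₃ = 1 / 2 * (1 - Real.sin (2 * U) / (2 * U)) / Real.sin θ1₃ ^ 2)
    (h1₄ : A1₄ / B₄ = 1 / 2 * (1 - Real.sin (2 * U) / (2 * U)) / Real.sin θ1₄ ^ 2)
    (h2₃ : A2₃ / B₃ = 1 / 2 * (1 + Real.sin (2 * U) / (2 * U)) / Real.cos θ2₃ ^ 2)
    (h2₄ : A2₄ / B₄ = 1 / 2 * (1 + Real.sin (2 * U) / (2 * U)) / Real.cos θ2₄ ^ 2)
    (a₃ a₄ A₃ A₄ : ℝ) (ha₃ : 0 < a₃) (ha₄ : 0 < a₄)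
    (h3 : (1 + Δ₃) * a₃ ^ Δ₃ * (A₃ / B₃) = U ^ Δ₃)
    (h4 : (1 + Δ₄) * a₄ ^ Δ₄ * (A₄ / B₄) = U ^ Δ₄) :
    A2 * A3₂ ^ (Δ₄ / (Δ₃ - Δ₄)) * A4₂ ^ (-Δ₃ / (Δ₃ - Δ₄)) *
        (a4₂ / a3₂) ^ (-(Δ₃ * Δ₄) / (Δ₃ - Δ₄)) * Real.cos θ₂ ^ 2 +
      A1 * A3₁ ^ (Δ₄ / (Δ₃ - Δ₄)) * A4₁ ^ (-Δ₃ / (Δ₃ - Δ₄)) *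
        (a4₁ / a3₁) ^ (-(Δ₃ * Δ₄) / (Δ₃ - Δ₄)) * Real.sin θ₁ ^ 2 =
    (a₃ / a₄) ^ (Δ₃ * Δ₄ / (Δ₃ - Δ₄)) *
        (A₃ / (A2₃ * Real.cos θ2₃ ^ 2 + A1₃ * Real.sin θ1₃ ^ 2)) ^ (Δ₄ / (Δ₃ - Δ₄)) *
        (A₄ / (A2₄ * Real.cos θ2₄ ^ 2 + A1₄ * Real.sin θ1₄ ^ 2)) ^ (-Δ₃ / (Δ₃ - Δ₄)) := by
  have hΔ₃' : 0 < 1 + Δ₃ := by linarith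
  have hΔ₄' : 0 < 1 + Δ₄ := by linarith
  have hw₂ := (eq_div_iff (pow_ne_zero 2 hθ₂)).1 h2
  have hw₁ := (eq_div_iff (pow_ne_zero 2 hθ₁)).1 h1
  rw [mul_rpow_mul_rpow_mul_rpow_mul_eq hU hB₂ hA3₂ hA4₂ ha3₂ ha4₂ hΔ₃' hΔ₄' hne h3₂ h4₂,
    mul_rpow_mul_rpow_mul_rpow_mul_eq hU hB₁ hA3₁ hA4₁ ha3₁ ha4₁ hΔ₃' hΔ₄' hne h3₁ h4₁, hw₂, hw₁,
    mul_add_mul_eq_of_div_eq hB₃.ne' (pow_ne_zero 2 hθ2₃) (pow_ne_zero 2 hθ1₃) h2₃ h1₃,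
    mul_add_mul_eq_of_div_eq hB₄.ne' (pow_ne_zero 2 hθ2₄) (pow_ne_zero 2 hθ1₄) h2₄ h1₄,
    div_rpow_mul_rpow_mul_rpow_eq_hybridConst hU ha₃ ha₄ hΔ₃' hΔ₄' hne h3 h4]
  ring

theorem exact_ternary_complete_hybrid_formula
    (U Δ₃ Δ₄ : ℝ) (hU : 0 < U) (hΔ₃ : 0 < Δ₃) (hΔ₄ : 0 < Δ₄) (hne : Δ₃ ≠ Δ₄)
    -- data for the first variant (formula (4.4))
    (θ₁ θ₂ : ℝ) (hθ₁ : Real.sin θ₁ ≠ 0) (hθ₂ : Real.cos θ₂ ≠ 0)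
    (B₁ B₂ A3₁ A3₂ A4₁ A4₂ a3₁ a3₂ a4₁ a4₂ A1 A2 : ℝ)
    (hB₁ : 0 < B₁) (hB₂ : 0 < B₂)
    (hA3₁ : 0 < A3₁) (hA3₂ : 0 < A3₂) (hA4₁ : 0 < A4₁) (hA4₂ : 0 < A4₂)
    (ha3₁ : 0 < a3₁) (ha3₂ : 0 < a3₂) (ha4₁ : 0 < a4₁) (ha4₂ : 0 < a4₂)
    (hA1 : 0 < A1) (hA2 : 0 < A2)
    (h1 : A1 / B₁ = 1 / 2 * (1 - Real.sin (2 * U) / (2 * U)) / Real.sin θ₁ ^ 2)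
    (h2 : A2 / B₂ = 1 / 2 * (1 + Real.sin (2 * U) / (2 * U)) / Real.cos θ₂ ^ 2)
    (h3₁ : (1 + Δ₃) * a3₁ ^ Δ₃ * (A3₁ / B₁) = U ^ Δ₃)
    (h3₂ : (1 + Δ₃) * a3₂ ^ Δ₃ * (A3₂ / B₂) = U ^ Δ₃)
    (h4₁ : (1 + Δ₄) * a4₁ ^ Δ₄ * (A4₁ / B₁) = U ^ Δ₄)
    (h4₂ : (1 + Δ₄) * a4₂ ^ Δ₄ * (A4₂ / B₂) = U ^ Δ₄)
    -- data for the second variant (formula (5.4))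
    (B₃ B₄ A1₃ A1₄ A2₃ A2₄ : ℝ) (θ1₃ θ1₄ θ2₃ θ2₄ : ℝ)
    (hB₃ : 0 < B₃) (hB₄ : 0 < B₄)
    (hA1₃ : 0 < A1₃) (hA1₄ : 0 < A1₄) (hA2₃ : 0 < A2₃) (hA2₄ : 0 < A2₄)
    (hθ1₃ : Real.sin θ1₃ ≠ 0) (hθ1₄ : Real.sin θ1₄ ≠ 0)
    (hθ2₃ : Real.cos θ2₃ ≠ 0) (hθ2₄ : Real.cos θ2₄ ≠ 0)
    (h1₃ : A1₃ / B₃ = 1 / 2 * (1 - Real.sin (2 * U) / (2 * U)) / Real.sin θ1₃ ^ 2)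
    (h1₄ : A1₄ / B₄ = 1 / 2 * (1 - Real.sin (2 * U) / (2 * U)) / Real.sin θ1₄ ^ 2)
    (h2₃ : A2₃ / B₃ = 1 / 2 * (1 + Real.sin (2 * U) / (2 * U)) / Real.cos θ2₃ ^ 2)
    (h2₄ : A2₄ / B₄ = 1 / 2 * (1 + Real.sin (2 * U) / (2 * U)) / Real.cos θ2₄ ^ 2)
    (a₃ a₄ A₃ A₄ : ℝ) (ha₃ : 0 < a₃) (ha₄ : 0 < a₄) (hA₃ : 0 < A₃) (hA₄ : 0 < A₄)
    (h3 : (1 + Δ₃) * a₃ ^ Δ₃ * (A₃ / B₃) = U ^ Δ₃)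
    (h4 : (1 + Δ₄) * a₄ ^ Δ₄ * (A₄ / B₄) = U ^ Δ₄) :
    A2 * A3₂ ^ (Δ₄ / (Δ₃ - Δ₄)) * A4₂ ^ (-Δ₃ / (Δ₃ - Δ₄)) *
        (a4₂ / a3₂) ^ (-(Δ₃ * Δ₄) / (Δ₃ - Δ₄)) * Real.cos θ₂ ^ 2 +
      A1 * A3₁ ^ (Δ₄ / (Δ₃ - Δ₄)) * A4₁ ^ (-Δ₃ / (Δ₃ - Δ₄)) *
        (a4₁ / a3₁) ^ (-(Δ₃ * Δ₄) / (Δ₃ - Δ₄)) * Real.sin θ₁ ^ 2 =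
    (a₃ / a₄) ^ (Δ₃ * Δ₄ / (Δ₃ - Δ₄)) *
        (A₃ / (A2₃ * Real.cos θ2₃ ^ 2 + A1₃ * Real.sin θ1₃ ^ 2)) ^ (Δ₄ / (Δ₃ - Δ₄)) *
        (A₄ / (A2₄ * Real.cos θ2₄ ^ 2 + A1₄ * Real.sin θ1₄ ^ 2)) ^ (-Δ₃ / (Δ₃ - Δ₄)) :=
  exact_ternary_complete_hybrid_formula_general U Δ₃ Δ₄ hU hΔ₃ hΔ₄ hne θ₁ θ₂ hθ₁ hθ₂ B₁ B₂ A3₁ A3₂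
    A4₁ A4₂ a3₁ a3₂ a4₁ a4₂ A1 A2 hB₁ hB₂ hA3₁ hA3₂ hA4₁ hA4₂ ha3₁ ha3₂ ha4₁ ha4₂ h1 h2 h3₁ h3₂ h4₁
    h4₂ B₃ B₄ A1₃ A1₄ A2₃ A2₄ θ1₃ θ1₄ θ2₃ θ2₄ hB₃ hB₄ hθ1₃ hθ1₄ hθ2₃ hθ2₄ h1₃ h1₄ h2₃ h2₄ a₃ a₄ A₃
    A₄ ha₃ ha₄ h3 h4
end
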